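/- Let X be a path-connected topological space with basepoint x₀ and H ≤ π₁(X,x₀). If X is homotopically path Hausdorff relative to H, then H is (S,d_∞)-closed. Conversely, if the path space P(X) (all paths [0,1] → X with the compact-open topology) is first countable — for instance if X is metrizable — and H is (S,d_∞)-closed, then X is homotopically path Hausdorff relative to H. -/

import Mathlib

open CategoryTheory

noncomputable section

universe u

attribute [local instance] Path.Homotopic.setoid

/-- The element of the fundamental group determined by a loop. -/
def loopClass {X : Type u} [TopologicalSpace X] {x : X} (γ : Path x x) :
    FundamentalGroup X x :=
  FundamentalGroup.fromPath (X := TopCat.of X) ⟦γ⟧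

/-- The homomorphism on fundamental groups induced by a based continuous map. -/
def inducedHom {X Y : Type u} [TopologicalSpace X] [TopologicalSpace Y]
    (f : C(X, Y)) (x : X) {y : Y} (h : f x = y) :
    FundamentalGroup X x →* FundamentalGroup Y y := by
  subst h
  exact (FundamentalGroupoid.fundamentalGroupoidFunctor.map
    (X := TopCat.of X) (Y := TopCat.of Y) (TopCat.ofHom f)).mapEnd ⟨x⟩

/-- Change of basepoint along a path, as an isomorphism of fundamental groups. -/
def pathConjEquiv {X : Type u} [TopologicalSpace X] {x y : X} (α : Path x y) :
    FundamentalGroup X x ≃* FundamentalGroup X y :=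
  FundamentalGroup.fundamentalGroupMulEquivOfPath α

/-- The path-conjugate subgroup `H^α = [α⁻]·H·[α]` of `π₁(X, α 1)`. -/
def conjSubgroup {X : Type u} [TopologicalSpace X] {x y : X} (α : Path x y)
    (H : Subgroup (FundamentalGroup X x)) : Subgroup (FundamentalGroup X y) :=
  H.map (pathConjEquiv α).toMonoidHom

/-- A subgroup `H ≤ π₁(X,x₀)` is `(T,g)`-closed for the closure pair `(T,g)` on the
based test space `(𝕋,t₀)` if for every continuous map `f : 𝕋 → X` with `f t₀ = x₀`
and `f#(T) ≤ H` one has `f#(g) ∈ H`. -/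
def IsTGClosed {T : Type u} [TopologicalSpace T] (t₀ : T)
    (Tsub : Subgroup (FundamentalGroup T t₀)) (g : FundamentalGroup T t₀)
    {X : Type u} [TopologicalSpace X] (x₀ : X)
    (H : Subgroup (FundamentalGroup X x₀)) : Prop :=
  ∀ (f : C(T, X)) (hf : f t₀ = x₀),
    Subgroup.map (inducedHom f t₀ hf) Tsub ≤ H → inducedHom f t₀ hf g ∈ H

/-- The `(T,g)`-closure of a subgroup `H ≤ π₁(X,x₀)`: the intersection of all
`(T,g)`-closed subgroups of `π₁(X,x₀)` containing `H`. -/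
def tgClosure {T : Type u} [TopologicalSpace T] (t₀ : T)
    (Tsub : Subgroup (FundamentalGroup T t₀)) (g : FundamentalGroup T t₀)
    {X : Type u} [TopologicalSpace X] (x₀ : X)
    (H : Subgroup (FundamentalGroup X x₀)) : Subgroup (FundamentalGroup X x₀) :=
  sInf {K : Subgroup (FundamentalGroup X x₀) | IsTGClosed t₀ Tsub g x₀ K ∧ H ≤ K}

/-- Equality of right cosets `H·a = H·b`. -/
def rightCosetEq {G : Type*} [Group G] (H : Subgroup G) (a b : G) : Prop :=
  (fun h => h * a) '' (H : Set G) = (fun h => h * b) '' (H : Set G)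

/-! ### The dyadic arc space `𝔻` -/

/-- The dyadic arc space `𝔻 ⊆ ℝ²`: the union of the base arc `[0,1] × {0}` and, for
each dyadic unital pair `(n,j)` (`n ≥ 1`, `1 ≤ j ≤ 2^(n-1)`), the upper semicircle of
radius `2⁻ⁿ` centered at `((2j-1)/2ⁿ, 0)`. -/
def DAset : Set (ℝ × ℝ) :=
  (Set.Icc (0 : ℝ) 1 ×ˢ ({0} : Set ℝ)) ∪
  {p | ∃ n j : ℕ, 0 < n ∧ 1 ≤ j ∧ j ≤ 2 ^ (n - 1) ∧
    (p.1 - (2 * (j : ℝ) - 1) / 2 ^ n) ^ 2 + p.2 ^ 2 = (1 / 2 ^ n) ^ 2 ∧ 0 ≤ p.2}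

/-- The basepoint `d₀ = (0,0)` of `𝔻`. -/
def dZero : DAset := ⟨(0, 0), Or.inl ⟨⟨le_refl _, zero_le_one⟩, rfl⟩⟩

/-- The point `(1,0)` of `𝔻`. -/
def dOne : DAset := ⟨(1, 0), Or.inl ⟨⟨zero_le_one, le_refl _⟩, rfl⟩⟩

/-- The underlying function of the standard arc `ℓ_{n,j}`:
`ℓ_{n,j}(u) = ((u+j-1)/2^(n-1), √(u-u²)/2^(n-1))`. -/
def stdArcFun (n j : ℕ) (u : ℝ) : ℝ × ℝ :=
  ((u + (j : ℝ) - 1) / 2 ^ (n - 1), Real.sqrt (u - u ^ 2) / 2 ^ (n - 1))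

lemma lamOne_mem (t : ℝ) (h0 : 0 ≤ t) (h1 : t ≤ 1) :
    ((t, Real.sqrt (t - t ^ 2)) : ℝ × ℝ) ∈ DAset := by
  have hnn : (0 : ℝ) ≤ t - t ^ 2 := by nlinarith
  have key : (t - (2 * ((1 : ℕ) : ℝ) - 1) / 2 ^ (1 : ℕ)) ^ 2 + Real.sqrt (t - t ^ 2) ^ 2
      = (1 / 2 ^ (1 : ℕ)) ^ 2 := by
    rw [Real.sq_sqrt hnn]
    push_cast
    ring_nf
  exact Or.inr ⟨1, 1, one_pos, le_refl _, by norm_num, key, Real.sqrt_nonneg _⟩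

/-- The path `λ₁ = ℓ_{1,1}` along the top semicircle of `𝔻`, from `d₀` to `(1,0)`. -/
def lamOnePath : Path dZero dOne where
  toFun t := ⟨((t : ℝ), Real.sqrt ((t : ℝ) - (t : ℝ) ^ 2)), lamOne_mem _ t.2.1 t.2.2⟩
  continuous_toFun := by
    apply Continuous.subtype_mk
    fun_prop
  source' := by
    apply Subtype.ext
    norm_num [dZero]
  target' := by
    apply Subtype.ext
    norm_num [dOne]

/-- The path `λ_∞(t) = (t,0)` along the base arc of `𝔻`, from `d₀` to `(1,0)`. -/
def lamInfPath : Path dZero dOne where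
  toFun t := ⟨((t : ℝ), 0), Or.inl ⟨⟨t.2.1, t.2.2⟩, rfl⟩⟩
  continuous_toFun := by
    apply Continuous.subtype_mk
    fun_prop
  source' := by
    apply Subtype.ext
    norm_num [dZero]
  target' := by
    apply Subtype.ext
    norm_num [dOne]

/-- The element `d_∞ = [λ₁ · λ_∞⁻] ∈ π₁(𝔻, d₀)`. -/
def dInfElem : FundamentalGroup DAset dZero :=
  loopClass (lamOnePath.trans lamInfPath.symm)

/-- A loop in `𝔻` based at `d₀` is a finite concatenation of standard paths if, for some
`m ≥ 1`, on each subinterval `[i/m, (i+1)/m]` it traverses some standard arc `ℓ_{n,j}`,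
affinely reparametrized, either forwards or backwards. -/
def IsStdConcat (γ : Path dZero dZero) : Prop :=
  ∃ m : ℕ, 0 < m ∧ ∀ i : ℕ, i < m →
    ∃ n j : ℕ, 0 < n ∧ 1 ≤ j ∧ j ≤ 2 ^ (n - 1) ∧
      ((∀ t : unitInterval, (i : ℝ) / m ≤ (t : ℝ) → (t : ℝ) ≤ ((i : ℝ) + 1) / m →
          (↑(γ t) : ℝ × ℝ) = stdArcFun n j ((m : ℝ) * (t : ℝ) - i)) ∨
       (∀ t : unitInterval, (i : ℝ) / m ≤ (t : ℝ) → (t : ℝ) ≤ ((i : ℝ) + 1) / m →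
          (↑(γ t) : ℝ × ℝ) = stdArcFun n j (1 - ((m : ℝ) * (t : ℝ) - i))))

/-- The subgroup `D ≤ π₁(𝔻, d₀)` of homotopy classes of loops at `d₀` that are finite
concatenations of standard paths and their reverses. -/
def DSub : Subgroup (FundamentalGroup DAset dZero) :=
  Subgroup.closure {g | ∃ γ : Path dZero dZero, IsStdConcat γ ∧ g = loopClass γ}

/-- The underlying function of the level-`n` path `λ_n = ℓ_{n,1}·ℓ_{n,2}·⋯·ℓ_{n,2^(n-1)}`. -/
def dyadicLevelFun (n : ℕ) (t : ℝ) : ℝ × ℝ :=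
  (t, Real.sqrt (Int.fract (2 ^ (n - 1) * t) - Int.fract (2 ^ (n - 1) * t) ^ 2) / 2 ^ (n - 1))

/-- Specification of the family `λ_n`, `n ≥ 1`, of level paths of `𝔻`. -/
def LamSpec (lam : ℕ → Path dZero dOne) : Prop :=
  ∀ n : ℕ, 0 < n → ∀ t : unitInterval, (↑((lam n) t) : ℝ × ℝ) = dyadicLevelFun n (t : ℝ)

/-- The generators `s_n = [λ_n · λ_{n+1}⁻]` and the subgroup
`S = ⟨s_n : n ≥ 1⟩ ≤ π₁(𝔻, d₀)`. -/
def SSub (lam : ℕ → Path dZero dOne) : Subgroup (FundamentalGroup DAset dZero) :=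
  Subgroup.closure {g | ∃ n : ℕ, 0 < n ∧ g = loopClass ((lam n).trans (lam (n + 1)).symm)}

/-- The element `d_∞ = [λ₁ · λ_∞⁻] ∈ π₁(𝔻, d₀)`, formed from a given family of
level paths. -/
def dInfOf (lam : ℕ → Path dZero dOne) : FundamentalGroup DAset dZero :=
  loopClass ((lam 1).trans lamInfPath.symm)

/-- `X` is homotopically path Hausdorff relative to `H ≤ π₁(X,x₀)`: for every pair of
paths `α, β` from `x₀` with the same endpoint and `[α·β⁻] ∉ H`, there are `n ≥ 1` and
open sets `U₁, …, U_{2^(n-1)}` covering `α` along the dyadic subdivision such that every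
path `γ` running through the `U_j` along the same subdivision and agreeing with `α` at
the subdivision points satisfies `[γ·β⁻] ∉ H`. -/
def HomotopicallyPathHausdorffRel {X : Type} [TopologicalSpace X] (x₀ : X)
    (H : Subgroup (FundamentalGroup X x₀)) : Prop :=
  ∀ (x : X) (α β : Path x₀ x), loopClass (α.trans β.symm) ∉ H →
    ∃ n : ℕ, 0 < n ∧ ∃ U : ℕ → Set X,
      (∀ j : ℕ, 1 ≤ j → j ≤ 2 ^ (n - 1) → IsOpen (U j)) ∧
      (∀ j : ℕ, 1 ≤ j → j ≤ 2 ^ (n - 1) → ∀ t : ℝ,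
        ((j : ℝ) - 1) / 2 ^ (n - 1) ≤ t → t ≤ (j : ℝ) / 2 ^ (n - 1) →
        α.extend t ∈ U j) ∧
      ∀ γ : Path x₀ x,
        (∀ j : ℕ, 1 ≤ j → j ≤ 2 ^ (n - 1) → ∀ t : ℝ,
          ((j : ℝ) - 1) / 2 ^ (n - 1) ≤ t → t ≤ (j : ℝ) / 2 ^ (n - 1) →
          γ.extend t ∈ U j) →
        (∀ j : ℕ, j ≤ 2 ^ (n - 1) →
          γ.extend ((j : ℝ) / 2 ^ (n - 1)) = α.extend ((j : ℝ) / 2 ^ (n - 1))) →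
        loopClass (γ.trans β.symm) ∉ H

/-!
In both directions the key object is the sequence `λₙ` of level paths of `𝔻`, which converges
uniformly to the base arc `λ_∞` and meets it at every level-`n` dyadic point.

If `X` is homotopically path Hausdorff relative to `H` and `f : 𝔻 → X` sends `S` into `H`, then
all `f ∘ λₙ` lie in one `H`-class while converging to `f ∘ λ_∞`; eventually they enter every
dyadic tube around `f ∘ λ_∞`, so `f ∘ λ_∞` is in that `H`-class as well, i.e. `f#(d_∞) ∈ H`.

Conversely, if `α` cannot be separated from `β` by dyadic tubes, first countability of the path
space yields paths `Γₙ → α`, each `H`-equivalent to `β` and agreeing with `α` at the level-`n`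
dyadic points. Sending the base arc along `α` and the level-`n` semicircles along `Γₙ` defines a
map `f : 𝔻 → X`. It is continuous off the axis, where the semicircles are locally finite. At an
axis point, `Γₙ → α` controls all high levels, and each of the finitely many low levels either
stays away from the point or has it as an endpoint, where `Γₙ` agrees with `α`. Then
`f#(S) ≤ H`, and `(S, d_∞)`-closedness gives `[α·β⁻] ∈ H`.
-/

open Filter Topology

section PathAlgebra

variable {X Y : Type u} [TopologicalSpace X] [TopologicalSpace Y] {x₀ x : X}

open Path.Homotopic.Quotient in
lemma loopClass_trans_symm_mul (p q r : Path x₀ x) :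
    loopClass (q.trans r.symm) * loopClass (p.trans q.symm) = loopClass (p.trans r.symm) := by
  show (mk (p.trans q.symm)).trans (mk (q.trans r.symm)) = mk (p.trans r.symm)
  simp only [mk_trans, mk_symm, trans_assoc]
  rw [← trans_assoc (symm _), symm_trans, refl_trans]

open Path.Homotopic.Quotient in
lemma loopClass_trans_symm_inv (p q : Path x₀ x) :
    (loopClass (p.trans q.symm))⁻¹ = loopClass (q.trans p.symm) := by
  show symm (mk (p.trans q.symm)) = mk (q.trans p.symm)
  rw [← mk_symm, Path.trans_symm, Path.symm_symm]

open Path.Homotopic.Quotient in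
lemma loopClass_trans_symm_self (p : Path x₀ x) : loopClass (p.trans p.symm) = 1 := by
  show mk (p.trans p.symm) = refl x₀
  simp only [mk_trans, mk_symm, trans_symm]

def PathEquivMod (H : Subgroup (FundamentalGroup X x₀)) (p q : Path x₀ x) : Prop :=
  loopClass (p.trans q.symm) ∈ H

namespace PathEquivMod

variable {H : Subgroup (FundamentalGroup X x₀)} {p q r : Path x₀ x}

lemma refl (H : Subgroup (FundamentalGroup X x₀)) (p : Path x₀ x) : PathEquivMod H p p := by
  rw [PathEquivMod, loopClass_trans_symm_self]
  exact H.one_mem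

lemma symm (h : PathEquivMod H p q) : PathEquivMod H q p := by
  rw [PathEquivMod, ← loopClass_trans_symm_inv]
  exact H.inv_mem h

lemma trans (hpq : PathEquivMod H p q) (hqr : PathEquivMod H q r) : PathEquivMod H p r := by
  rw [PathEquivMod, ← loopClass_trans_symm_mul p q r]
  exact H.mul_mem hqr hpq

end PathEquivMod

lemma inducedHom_loopClass {f : C(X, Y)} {y : Y} (h : f x = y) {ℓ : Path x x} {L : Path y y}
    (hL : ∀ t, f (ℓ t) = L t) : inducedHom f x h (loopClass ℓ) = loopClass L := by
  subst h
  obtain rfl : ℓ.map f.continuous = L := by ext t; exact hL t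
  rfl

lemma trans_symm_apply_eq {Z : Type u} [TopologicalSpace Z] {z₀ z₁ : Z} {f : Z → X}
    {a b : Path z₀ z₁} {A B : Path x₀ x} (ha : ∀ t, f (a t) = A t) (hb : ∀ t, f (b t) = B t)
    (t : unitInterval) : f ((a.trans b.symm) t) = (A.trans B.symm) t := by
  rw [Path.trans_apply, Path.trans_apply]
  split_ifs
  exacts [ha _, hb _]

end PathAlgebra

section DyadicTubes

lemma div_two_pow_eq_of_le {n N : ℕ} (j : ℕ) (hn : 0 < n) (hnN : n ≤ N) :
    (j : ℝ) / 2 ^ (n - 1) = ((j * 2 ^ (N - n) : ℕ) : ℝ) / 2 ^ (N - 1) := by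
  have h : (2 : ℝ) ^ (N - 1) = 2 ^ (N - n) * 2 ^ (n - 1) := by
    rw [← pow_add]; congr 1; omega
  push_cast
  rw [h, mul_comm (2 ^ (N - n) : ℝ), mul_div_mul_right _ _ (by positivity)]

def dyadicPiece (n j : ℕ) : Set unitInterval :=
  {t | 1 ≤ j ∧ j ≤ 2 ^ (n - 1) ∧ ((j : ℝ) - 1) / 2 ^ (n - 1) ≤ t ∧ (t : ℝ) ≤ j / 2 ^ (n - 1)}

lemma isCompact_dyadicPiece (n j : ℕ) : IsCompact (dyadicPiece n j) := by
  refine IsClosed.isCompact ?_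
  by_cases hj : 1 ≤ j ∧ j ≤ 2 ^ (n - 1)
  · simp only [dyadicPiece, hj, true_and]
    exact (isClosed_le continuous_const continuous_subtype_val).inter
      (isClosed_le continuous_subtype_val continuous_const)
  · simp only [dyadicPiece, ← and_assoc, hj, false_and, Set.ofPred_false, isClosed_empty]

lemma exists_mem_dyadicPiece (n : ℕ) (t : unitInterval) : ∃ j, t ∈ dyadicPiece n j := by
  have hs : (0 : ℝ) < 2 ^ (n - 1) := by positivity
  have hst : 0 ≤ 2 ^ (n - 1) * (t : ℝ) := mul_nonneg hs.le t.2.1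
  refine ⟨max 1 ⌈2 ^ (n - 1) * (t : ℝ)⌉₊, le_max_left _ _, ?_, ?_, ?_⟩
  · refine max_le Nat.one_le_two_pow (Nat.ceil_le.2 ?_)
    push_cast
    nlinarith [t.2.2]
  · rw [div_le_iff₀ hs]
    rcases le_total ⌈2 ^ (n - 1) * (t : ℝ)⌉₊ 1 with h | h
    · rw [max_eq_left h]; push_cast; linarith
    · rw [max_eq_right h]
      linarith [Nat.ceil_lt_add_one hst]
  · rw [le_div_iff₀ hs, mul_comm]
    exact (Nat.le_ceil _).trans (by exact_mod_cast le_max_right _ _)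

lemma dist_le_of_mem_dyadicPiece {n j : ℕ} {s t : unitInterval} (hs : s ∈ dyadicPiece n j)
    (ht : t ∈ dyadicPiece n j) : dist s t ≤ 1 / 2 ^ (n - 1) := by
  obtain ⟨-, -, hs₁, hs₂⟩ := hs
  obtain ⟨-, -, ht₁, ht₂⟩ := ht
  rw [Subtype.dist_eq, Real.dist_eq, abs_le]
  have : (j : ℝ) / 2 ^ (n - 1) = ((j : ℝ) - 1) / 2 ^ (n - 1) + 1 / 2 ^ (n - 1) := by ring
  constructor <;> linarith

variable {X : Type u} [TopologicalSpace X] {x₀ x : X}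

/- `InDyadicTube` and `AgreesAtDyadics` are verbatim the two conditions on `γ` in
`HomotopicallyPathHausdorffRel`, which therefore unfolds to them. -/
def InDyadicTube (n : ℕ) (U : ℕ → Set X) (γ : Path x₀ x) : Prop :=
  ∀ j : ℕ, 1 ≤ j → j ≤ 2 ^ (n - 1) → ∀ t : ℝ,
    ((j : ℝ) - 1) / 2 ^ (n - 1) ≤ t → t ≤ (j : ℝ) / 2 ^ (n - 1) → γ.extend t ∈ U j

lemma inDyadicTube_iff {n : ℕ} {U : ℕ → Set X} {γ : Path x₀ x} :
    InDyadicTube n U γ ↔ ∀ j, Set.MapsTo γ (dyadicPiece n j) (U j) := by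
  constructor
  · rintro h j t ⟨hj₁, hj₂, ht₁, ht₂⟩
    simpa only [Path.extend_apply γ t.2] using h j hj₁ hj₂ t ht₁ ht₂
  · intro h j hj₁ hj₂ t ht₁ ht₂
    have ht : t ∈ Set.Icc (0 : ℝ) 1 := by
      have hj₁' : (1 : ℝ) ≤ j := by exact_mod_cast hj₁
      have hj₂' : (j : ℝ) ≤ 2 ^ (n - 1) := by exact_mod_cast hj₂
      exact ⟨le_trans (div_nonneg (by linarith) (by positivity)) ht₁,
        ht₂.trans ((div_le_one (by positivity)).2 hj₂')⟩
    rw [Path.extend_apply γ ht]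
    exact h j ⟨hj₁, hj₂, ht₁, ht₂⟩

def AgreesAtDyadics (n : ℕ) (γ α : Path x₀ x) : Prop :=
  ∀ j : ℕ, j ≤ 2 ^ (n - 1) → γ.extend ((j : ℝ) / 2 ^ (n - 1)) = α.extend ((j : ℝ) / 2 ^ (n - 1))

lemma AgreesAtDyadics.mono {n N : ℕ} {γ α : Path x₀ x} (h : AgreesAtDyadics N γ α) (hn : 0 < n)
    (hnN : n ≤ N) : AgreesAtDyadics n γ α := by
  intro j hj
  rw [div_two_pow_eq_of_le j hn hnN]
  refine h _ ?_
  calc j * 2 ^ (N - n) ≤ 2 ^ (n - 1) * 2 ^ (N - n) := Nat.mul_le_mul_right _ hj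
    _ = 2 ^ (N - 1) := by rw [← pow_add]; congr 1; omega

lemma AgreesAtDyadics.map {Y : Type u} [TopologicalSpace Y] {y₀ y : Y} {n : ℕ}
    {γ α : Path y₀ y} (h : AgreesAtDyadics n γ α) (f : C(Y, X)) :
    AgreesAtDyadics n (γ.map f.continuous) (α.map f.continuous) := fun j hj =>
  congrArg f (h j hj)

end DyadicTubes

section CompactOpen

open Metric in
lemma ContinuousMap.exists_tube_subset_of_mem_nhds {Y X : Type*} [MetricSpace Y]
    [TopologicalSpace X] (ι : Type*) {α : C(Y, X)} {V : Set C(Y, X)} (hV : V ∈ 𝓝 α) :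
    ∃ δ > 0, ∀ P : ι → Set Y, (∀ y, ∃ i, y ∈ P i) → (∀ i, ∀ s ∈ P i, ∀ t ∈ P i, dist s t < δ) →
      ∃ U : ι → Set X, (∀ i, IsOpen (U i)) ∧ (∀ i, Set.MapsTo α (P i) (U i)) ∧
        ∀ γ : C(Y, X), (∀ i, Set.MapsTo γ (P i) (U i)) → γ ∈ V := by
  obtain ⟨S, hSfin, hS, hSV⟩ := ContinuousMap.mem_nhds_iff.1 hV
  have hthick : ∀ᶠ δ in 𝓝[>] (0 : ℝ), ∀ KU ∈ S, thickening δ KU.1 ⊆ α ⁻¹' KU.2 := by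
    refine hSfin.eventually_all.2 fun KU hKU => ?_
    obtain ⟨hK, hU, hαKU⟩ := hS KU.1 KU.2 hKU
    obtain ⟨δ₀, hδ₀, hsub⟩ := hK.exists_thickening_subset_open (hU.preimage α.continuous) hαKU
    filter_upwards [Ioo_mem_nhdsGT hδ₀] with δ hδ using (thickening_mono hδ.2.le _).trans hsub
  obtain ⟨δ, hδ, hδpos⟩ := (hthick.and self_mem_nhdsWithin).exists
  refine ⟨δ, hδpos, fun P hcover hdiam => ⟨fun i => ⋂ KU ∈ {KU ∈ S | (P i ∩ KU.1).Nonempty}, KU.2,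
    fun i => (hSfin.subset (Set.sep_subset _ _)).isOpen_biInter fun KU hKU => (hS _ _ hKU.1).2.1,
    ?_, ?_⟩⟩
  · rintro i t ht
    refine Set.mem_iInter₂.2 fun KU ⟨hKU, s, hs, hsK⟩ => hδ KU hKU ?_
    exact mem_thickening_iff.2 ⟨s, hsK, hdiam i t ht s hs⟩
  · intro γ hγ
    refine hSV fun K U hKU t htK => ?_
    obtain ⟨i, hi⟩ := hcover t
    exact Set.mem_iInter₂.1 (hγ i hi) (K, U) ⟨hKU, t, hi, htK⟩

variable {X : Type u} [TopologicalSpace X] {x₀ x : X}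

lemma exists_dyadicTube_subset (α : Path x₀ x) {V : Set C(unitInterval, X)}
    (hV : V ∈ 𝓝 (α : C(unitInterval, X))) (k : ℕ) :
    ∃ n, k < n ∧ ∃ U : ℕ → Set X, (∀ j, IsOpen (U j)) ∧ InDyadicTube n U α ∧
      ∀ γ : Path x₀ x, InDyadicTube n U γ → (γ : C(unitInterval, X)) ∈ V := by
  obtain ⟨δ, hδ, htube⟩ := ContinuousMap.exists_tube_subset_of_mem_nhds ℕ hV
  obtain ⟨M, hM⟩ := exists_pow_lt_of_lt_one hδ (by norm_num : (1 / 2 : ℝ) < 1)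
  set n := max (k + 1) (M + 1)
  have hlen : 1 / 2 ^ (n - 1) < δ := by
    refine lt_of_le_of_lt ?_ hM
    rw [one_div_pow, one_div_le_one_div (by positivity) (by positivity)]
    exact pow_le_pow_right₀ one_le_two (by omega)
  obtain ⟨U, hU, hαU, hUV⟩ := htube (dyadicPiece n) (exists_mem_dyadicPiece n)
    fun j s hs t ht => (dist_le_of_mem_dyadicPiece hs ht).trans_lt hlen
  exact ⟨n, by omega, U, hU, inDyadicTube_iff.2 hαU, fun γ hγ => hUV γ (inDyadicTube_iff.1 hγ)⟩

lemma Filter.Tendsto.eventually_inDyadicTube {ι : Type*} {l : Filter ι} {Γ : ι → Path x₀ x}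
    {α : Path x₀ x} (hΓ : Tendsto (fun i => (Γ i : C(unitInterval, X))) l (𝓝 α)) {n : ℕ}
    {U : ℕ → Set X} (hU : ∀ j, 1 ≤ j → j ≤ 2 ^ (n - 1) → IsOpen (U j))
    (hα : InDyadicTube n U α) : ∀ᶠ i in l, InDyadicTube n U (Γ i) := by
  have hpiece : ∀ j ∈ Finset.Icc 1 (2 ^ (n - 1)),
      ∀ᶠ i in l, Set.MapsTo (Γ i) (dyadicPiece n j) (U j) := fun j hj =>
    have hj := Finset.mem_Icc.1 hj
    hΓ.eventually ((ContinuousMap.isOpen_setOfPred_mapsTo (isCompact_dyadicPiece n j)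
      (hU j hj.1 hj.2)).mem_nhds (inDyadicTube_iff.1 hα j))
  filter_upwards [(Filter.eventually_all_finset _).2 hpiece] with i hi
  refine inDyadicTube_iff.2 fun j t ht => hi j (Finset.mem_Icc.2 ⟨ht.1, ht.2.1⟩) ht

lemma Filter.Tendsto.path_extend {ι : Type*} {l : Filter ι} {Γ : ι → Path x₀ x} {α : Path x₀ x}
    (hΓ : Tendsto (fun i => (Γ i : C(unitInterval, X))) l (𝓝 α)) (y : ℝ) :
    Tendsto (fun iy : ι × ℝ => (Γ iy.1).extend iy.2) (l ×ˢ 𝓝 y) (𝓝 (α.extend y)) :=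
  (hΓ.comp tendsto_fst).eval ((continuous_projIcc.tendsto y).comp tendsto_snd)

lemma exists_seq_tendsto_of_forall_inDyadicTube [FirstCountableTopology C(unitInterval, X)]
    (α : Path x₀ x) (Q : Path x₀ x → Prop)
    (h : ∀ n, 0 < n → ∀ U : ℕ → Set X, (∀ j, IsOpen (U j)) → InDyadicTube n U α →
      ∃ γ, InDyadicTube n U γ ∧ AgreesAtDyadics n γ α ∧ Q γ) :
    ∃ Γ : ℕ → Path x₀ x, Tendsto (fun k => (Γ k : C(unitInterval, X))) atTop (𝓝 α) ∧
      (∀ k, 0 < k → AgreesAtDyadics k (Γ k) α) ∧ ∀ k, Q (Γ k) := by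
  obtain ⟨B, hB⟩ := (𝓝 (α : C(unitInterval, X))).exists_antitone_basis
  have hex : ∀ k, ∃ γ : Path x₀ x, (γ : C(unitInterval, X)) ∈ B k ∧
      (0 < k → AgreesAtDyadics k γ α) ∧ Q γ := fun k => by
    obtain ⟨n, hkn, U, hU, hαU, hUB⟩ := exists_dyadicTube_subset α (hB.mem k) k
    obtain ⟨γ, hγU, hγα, hQ⟩ := h n (by omega) U hU hαU
    exact ⟨γ, hUB γ hγU, fun hk => hγα.mono hk hkn.le, hQ⟩
  choose Γ hΓB hΓα hΓQ using hex
  exact ⟨Γ, hB.tendsto hΓB, hΓα, hΓQ⟩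

end CompactOpen

section LevelArcs

/-- The circle with diameter `[(j-1)/2^(n-1), j/2^(n-1)] × {0}`, in coordinates scaled by
`2^(n-1)`; its upper half is the semicircle `𝔻(n,j)`. -/
def dyadicArc (n j : ℕ) : Set (ℝ × ℝ) :=
  {p | (2 ^ (n - 1) * p.2) ^ 2 = (2 ^ (n - 1) * p.1 - (j - 1)) * (j - 2 ^ (n - 1) * p.1)}

def levelArcs (n : ℕ) : Set (ℝ × ℝ) :=
  ⋃ j ∈ Finset.Icc 1 (2 ^ (n - 1)), dyadicArc n j

lemma mem_levelArcs {n : ℕ} {p : ℝ × ℝ} :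
    p ∈ levelArcs n ↔ ∃ j, 1 ≤ j ∧ j ≤ 2 ^ (n - 1) ∧ p ∈ dyadicArc n j := by
  simp [levelArcs, and_assoc]

lemma isClosed_levelArcs (n : ℕ) : IsClosed (levelArcs n) :=
  (Finset.Icc 1 (2 ^ (n - 1))).finite_toSet.isClosed_biUnion fun _ _ =>
    isClosed_eq (by fun_prop) (by fun_prop)

lemma exists_mem_levelArcs_of_mem_DAset {p : ℝ × ℝ} (hp : p ∈ DAset) (hp₂ : p.2 ≠ 0) :
    ∃ n, 0 < n ∧ p ∈ levelArcs n := by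
  obtain ⟨-, hp₂'⟩ | ⟨n, j, hn, hj₁, hj₂, hcirc, -⟩ := hp
  · exact absurd hp₂' hp₂
  refine ⟨n, hn, mem_levelArcs.2 ⟨j, hj₁, hj₂, ?_⟩⟩
  have h2n : (2 : ℝ) ^ n = 2 * 2 ^ (n - 1) := by rw [← pow_succ']; congr 1; omega
  rw [h2n] at hcirc
  field_simp at hcirc
  simp only [dyadicArc, Set.mem_ofPred_eq]
  linear_combination hcirc / 4

lemma sq_mul_snd_le_of_mem_levelArcs {n : ℕ} {p : ℝ × ℝ} (hp : p ∈ levelArcs n) :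
    (2 ^ (n - 1) * p.2) ^ 2 ≤ 1 / 4 := by
  obtain ⟨j, -, -, hp⟩ := mem_levelArcs.1 hp
  rw [dyadicArc, Set.mem_ofPred_eq] at hp
  nlinarith [sq_nonneg (2 ^ (n - 1) * p.1 - (j - 1) - 1 / 2)]

lemma abs_snd_le_of_mem_levelArcs {n : ℕ} {p : ℝ × ℝ} (hp : p ∈ levelArcs n) :
    |p.2| ≤ 1 / 2 ^ (n - 1) := by
  have h : |2 ^ (n - 1) * p.2| ≤ 1 / 2 :=
    abs_le_of_sq_le_sq (by linarith [sq_mul_snd_le_of_mem_levelArcs hp]) (by norm_num)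
  rw [abs_mul, abs_of_pos (by positivity)] at h
  rw [le_div_iff₀ (by positivity)]
  linarith

lemma lt_mul_fst_of_mem_dyadicArc {n j : ℕ} {p : ℝ × ℝ} (hp : p ∈ dyadicArc n j) (hp₂ : p.2 ≠ 0) :
    (j : ℝ) - 1 < 2 ^ (n - 1) * p.1 ∧ 2 ^ (n - 1) * p.1 < j := by
  rw [dyadicArc, Set.mem_ofPred_eq] at hp
  have hpos : 0 < (2 ^ (n - 1) * p.2) ^ 2 := by positivity
  constructor <;> nlinarith

lemma sub_mul_sub_lt_of_nested {a b a' b' u : ℝ} (ha : a ≤ a') (hb : b' ≤ b)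
    (hlen : b' - a' < b - a) (hu₁ : a' < u) (hu₂ : u < b') :
    (u - a') * (b' - u) < (u - a) * (b - u) := by
  rcases ha.lt_or_eq with ha | rfl
  · nlinarith [mul_pos (sub_pos.2 ha) (by linarith : 0 < b - u),
      mul_nonneg (sub_pos.2 hu₁).le (sub_nonneg.2 hb)]
  · nlinarith [mul_pos (sub_pos.2 hu₁) (by linarith : 0 < b - b')]

lemma dyadic_index_bounds {k i j : ℕ} {Q : ℝ} (hQ₁ : (j : ℝ) - 1 < Q) (hQ₂ : Q < j)
    (hi₁ : (i : ℝ) - 1 < 2 ^ k * Q) (hi₂ : 2 ^ k * Q < i) :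
    (2 : ℝ) ^ k * (j - 1) ≤ i - 1 ∧ (i : ℝ) ≤ 2 ^ k * j := by
  have hk : (0 : ℝ) < 2 ^ k := by positivity
  have h₁ : ((i : ℤ) : ℝ) < ((2 ^ k * j + 1 : ℤ) : ℝ) := by
    push_cast; nlinarith [mul_lt_mul_of_pos_left hQ₂ hk]
  have h₂ : ((2 ^ k * (j - 1) : ℤ) : ℝ) < ((i : ℤ) : ℝ) := by
    push_cast; nlinarith [mul_lt_mul_of_pos_left hQ₁ hk]
  have h₁' := Int.lt_add_one_iff.1 (Int.cast_lt.1 h₁)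
  have h₂' := Int.add_one_le_of_lt (Int.cast_lt.1 h₂)
  constructor
  · have := (Int.cast_le (R := ℝ)).2 h₂'
    push_cast at this
    linarith
  · exact_mod_cast h₁'

lemma false_of_mem_levelArcs_of_lt {n m : ℕ} {p : ℝ × ℝ} (hn : 0 < n) (hnm : n < m)
    (hp₂ : p.2 ≠ 0) (hpn : p ∈ levelArcs n) (hpm : p ∈ levelArcs m) : False := by
  obtain ⟨j, -, -, hj⟩ := mem_levelArcs.1 hpn
  obtain ⟨i, -, -, hi⟩ := mem_levelArcs.1 hpm
  obtain ⟨hj₁, hj₂⟩ := lt_mul_fst_of_mem_dyadicArc hj hp₂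
  have hs : (2 : ℝ) ^ (m - 1) = 2 ^ (m - n) * 2 ^ (n - 1) := by rw [← pow_add]; congr 1; omega
  have hk : (2 : ℝ) ≤ 2 ^ (m - n) := by
    calc (2 : ℝ) = 2 ^ 1 := (pow_one 2).symm
      _ ≤ 2 ^ (m - n) := pow_le_pow_right₀ one_le_two (by omega)
  obtain ⟨hi₁, hi₂⟩ := lt_mul_fst_of_mem_dyadicArc hi hp₂
  rw [hs, mul_assoc] at hi₁ hi₂
  -- the level-`m` dyadic interval of `p.1` lies inside its strictly longer level-`n` one, so the
  -- smaller circle lies inside the larger one and can only touch it on the axis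
  obtain ⟨hlo, hup⟩ := dyadic_index_bounds hj₁ hj₂ hi₁ hi₂
  rw [dyadicArc, Set.mem_ofPred_eq, hs] at hi
  rw [dyadicArc, Set.mem_ofPred_eq] at hj
  refine (sub_mul_sub_lt_of_nested hlo hup (by nlinarith) hi₁ hi₂).ne ?_
  linear_combination -hi + (2 ^ (m - n)) ^ 2 * hj

lemma eq_of_mem_levelArcs {n m : ℕ} {p : ℝ × ℝ} (hn : 0 < n) (hm : 0 < m) (hp₂ : p.2 ≠ 0)
    (hpn : p ∈ levelArcs n) (hpm : p ∈ levelArcs m) : n = m := by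
  rcases lt_trichotomy n m with h | h | h
  · exact (false_of_mem_levelArcs_of_lt hn h hp₂ hpn hpm).elim
  · exact h
  · exact (false_of_mem_levelArcs_of_lt hm h hp₂ hpm hpn).elim

lemma exists_fst_eq_of_mem_levelArcs {n : ℕ} {p : ℝ × ℝ} (hp : p ∈ levelArcs n) (hp₂ : p.2 = 0) :
    ∃ i : ℕ, i ≤ 2 ^ (n - 1) ∧ p.1 = i / 2 ^ (n - 1) := by
  obtain ⟨j, hj₁, hj₂, hj⟩ := mem_levelArcs.1 hp
  rw [dyadicArc, Set.mem_ofPred_eq, hp₂, mul_zero, zero_pow two_ne_zero, eq_comm,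
    mul_eq_zero, sub_eq_zero, sub_eq_zero] at hj
  have hs : (2 : ℝ) ^ (n - 1) ≠ 0 := by positivity
  rcases hj with h | h
  · refine ⟨j - 1, by omega, ?_⟩
    rw [Nat.cast_sub hj₁, Nat.cast_one, ← h, mul_div_cancel_left₀ _ hs]
  · exact ⟨j, hj₂, by rw [h, mul_div_cancel_left₀ _ hs]⟩

lemma dyadicLevelFun_mem_levelArcs (n : ℕ) {t : ℝ} (ht₀ : 0 ≤ t) (ht₁ : t ≤ 1) :
    dyadicLevelFun n t ∈ levelArcs n := by
  have hs : (0 : ℝ) < 2 ^ (n - 1) := by positivity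
  have hsnd : (2 ^ (n - 1) * (dyadicLevelFun n t).2) ^ 2 =
      Int.fract (2 ^ (n - 1) * t) * (1 - Int.fract (2 ^ (n - 1) * t)) := by
    rw [dyadicLevelFun, mul_div_cancel₀ _ hs.ne', Real.sq_sqrt]
    · ring
    · nlinarith [Int.fract_nonneg ((2 : ℝ) ^ (n - 1) * t), Int.fract_lt_one ((2 : ℝ) ^ (n - 1) * t)]
  rcases ht₁.lt_or_eq with ht₁ | rfl
  · have hfloor : (⌊(2 : ℝ) ^ (n - 1) * t⌋₊ : ℝ) = ⌊(2 : ℝ) ^ (n - 1) * t⌋ := by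
      exact_mod_cast Int.natCast_floor_eq_floor (by positivity)
    refine mem_levelArcs.2 ⟨⌊(2 : ℝ) ^ (n - 1) * t⌋₊ + 1, le_add_self, ?_, ?_⟩
    · have : ⌊(2 : ℝ) ^ (n - 1) * t⌋₊ < 2 ^ (n - 1) :=
        (Nat.floor_lt (by positivity)).2 (by push_cast; nlinarith)
      omega
    · rw [dyadicArc, Set.mem_ofPred_eq, hsnd, Int.fract, ← hfloor]
      dsimp only [dyadicLevelFun]
      push_cast
      ring
  · refine mem_levelArcs.2 ⟨2 ^ (n - 1), Nat.one_le_two_pow, le_rfl, ?_⟩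
    have : Int.fract ((2 : ℝ) ^ (n - 1) * 1) = 0 := by
      rw [mul_one, show (2 : ℝ) ^ (n - 1) = ((2 ^ (n - 1) : ℕ) : ℝ) by push_cast; rfl,
        Int.fract_natCast]
    rw [dyadicArc, Set.mem_ofPred_eq, hsnd, this]
    dsimp only [dyadicLevelFun]
    push_cast
    ring

lemma eventually_mem_levelArcs {n : ℕ} {p : ℝ × ℝ} (hn : 0 < n) (hp₂ : p.2 ≠ 0)
    (hp : p ∈ levelArcs n) : ∀ᶠ q in 𝓝 p, q ∈ DAset → q.2 ≠ 0 ∧ q ∈ levelArcs n := by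
  have hp₂' : 0 < |p.2| / 2 := half_pos (abs_pos.2 hp₂)
  obtain ⟨M, hM⟩ := exists_pow_lt_of_lt_one hp₂' (by norm_num : (1 / 2 : ℝ) < 1)
  have hhigh : ∀ᶠ q in 𝓝 p, |p.2| / 2 < |q.2| :=
    (continuous_abs.comp continuous_snd).continuousAt.eventually
      (lt_mem_nhds (half_lt_self (abs_pos.2 hp₂)))
  have hother : ∀ᶠ q in 𝓝 p, ∀ m ∈ Finset.range (M + 1), 0 < m → m ≠ n → q ∉ levelArcs m := by
    refine (eventually_all_finset _).2 fun m _ => ?_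
    by_cases hm : 0 < m ∧ m ≠ n
    · filter_upwards [(isClosed_levelArcs m).isOpen_compl.mem_nhds
        fun hpm => hm.2 (eq_of_mem_levelArcs hm.1 hn hp₂ hpm hp)] with q hq using fun _ _ => hq
    · exact Eventually.of_forall fun q h₁ h₂ => (hm ⟨h₁, h₂⟩).elim
  filter_upwards [hhigh, hother] with q hqhigh hqother hq
  have hq₂ : q.2 ≠ 0 := fun h => by simp [h] at hqhigh; linarith
  refine ⟨hq₂, ?_⟩
  obtain ⟨m, hm, hqm⟩ := exists_mem_levelArcs_of_mem_DAset hq hq₂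
  by_contra hqn
  refine hqother m (Finset.mem_range.2 ?_) hm (by rintro rfl; exact hqn hqm) hqm
  have : (1 / 2 : ℝ) ^ M < (1 / 2) ^ (m - 1) := by
    rw [one_div_pow (2 : ℝ) (m - 1)]
    linarith [abs_snd_le_of_mem_levelArcs hqm]
  have := (pow_lt_pow_iff_right_of_lt_one₀ (by norm_num) (by norm_num)).1 this
  omega

end LevelArcs

section ArcMap

variable {X : Type u} [TopologicalSpace X] {x₀ x : X}

open Classical in
/-- The level of the semicircle through an off-axis point of `𝔻`; it is unique by
`eq_of_mem_levelArcs`. -/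
def arcLevel (p : ℝ × ℝ) : ℕ :=
  if h : ∃ n, 0 < n ∧ p ∈ levelArcs n then h.choose else 0

def arcMap (α : Path x₀ x) (Γ : ℕ → Path x₀ x) (p : ℝ × ℝ) : X :=
  if p.2 = 0 then α.extend p.1 else (Γ (arcLevel p)).extend p.1

variable {α : Path x₀ x} {Γ : ℕ → Path x₀ x}

lemma arcMap_of_snd_eq_zero {p : ℝ × ℝ} (hp : p.2 = 0) : arcMap α Γ p = α.extend p.1 :=
  if_pos hp

lemma arcMap_of_mem_levelArcs (hΓα : ∀ n, 0 < n → AgreesAtDyadics n (Γ n) α) {n : ℕ}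
    (hn : 0 < n) {p : ℝ × ℝ} (hp : p ∈ levelArcs n) : arcMap α Γ p = (Γ n).extend p.1 := by
  by_cases hp₂ : p.2 = 0
  · obtain ⟨i, hi, hpi⟩ := exists_fst_eq_of_mem_levelArcs hp hp₂
    rw [arcMap_of_snd_eq_zero hp₂, hpi, hΓα n hn i hi]
  · have hex : ∃ n, 0 < n ∧ p ∈ levelArcs n := ⟨n, hn, hp⟩
    have hlevel : arcLevel p = n := by
      rw [arcLevel, dif_pos hex]
      exact eq_of_mem_levelArcs hex.choose_spec.1 hn hp₂ hex.choose_spec.2 hp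
    rw [arcMap, if_neg hp₂, hlevel]

lemma continuousWithinAt_arcMap_of_snd_ne_zero (hΓα : ∀ n, 0 < n → AgreesAtDyadics n (Γ n) α)
    {p : ℝ × ℝ} (hp : p ∈ DAset) (hp₂ : p.2 ≠ 0) : ContinuousWithinAt (arcMap α Γ) DAset p := by
  obtain ⟨n, hn, hpn⟩ := exists_mem_levelArcs_of_mem_DAset hp hp₂
  have hcont : ContinuousAt (fun q : ℝ × ℝ => (Γ n).extend q.1) p := by fun_prop
  refine hcont.continuousWithinAt.congr_of_eventuallyEq ?_ (arcMap_of_mem_levelArcs hΓα hn hpn)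
  filter_upwards [eventually_nhdsWithin_iff.2 (eventually_mem_levelArcs hn hp₂ hpn)] with q hq
  exact arcMap_of_mem_levelArcs hΓα hn hq.2

lemma continuousWithinAt_arcMap_of_snd_eq_zero
    (hΓ : Tendsto (fun n => (Γ n : C(unitInterval, X))) atTop (𝓝 α))
    (hΓα : ∀ n, 0 < n → AgreesAtDyadics n (Γ n) α) {p : ℝ × ℝ} (hp₂ : p.2 = 0) :
    ContinuousWithinAt (arcMap α Γ) DAset p := by
  rw [ContinuousWithinAt, arcMap_of_snd_eq_zero hp₂]
  refine fun W hW => mem_map.2 ?_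
  obtain ⟨T, hT, Y, hY, hTY⟩ := mem_prod_iff.1 (hΓ.path_extend p.1 hW)
  obtain ⟨N, hN⟩ := mem_atTop_sets.1 hT
  have hhigh : ∀ᶠ q : ℝ × ℝ in 𝓝 p, ∀ k ≥ N, (Γ k).extend q.1 ∈ W :=
    (continuous_fst.tendsto p).eventually_mem hY |>.mono fun q hq k hk =>
      hTY (a := (k, q.1)) ⟨hN k hk, hq⟩
  have hlow : ∀ᶠ q : ℝ × ℝ in 𝓝 p, ∀ k ∈ Finset.range N, 0 < k → q ∈ levelArcs k →
      (Γ k).extend q.1 ∈ W := by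
    refine (eventually_all_finset _).2 fun k _ => ?_
    by_cases hk : 0 < k
    swap
    · exact Eventually.of_forall fun q hk' => absurd hk' hk
    by_cases hpk : p ∈ levelArcs k
    · -- `p` is then an endpoint of a level-`k` arc, where `Γ k` agrees with `α`
      have heq : (Γ k).extend p.1 = α.extend p.1 := by
        rw [← arcMap_of_mem_levelArcs hΓα hk hpk, arcMap_of_snd_eq_zero hp₂]
      have hcont : ContinuousAt (fun q : ℝ × ℝ => (Γ k).extend q.1) p := by fun_prop
      filter_upwards [hcont.eventually_mem (heq ▸ hW)] with q hq using fun _ _ => hq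
    · filter_upwards [(isClosed_levelArcs k).isOpen_compl.mem_nhds hpk] with q hq
      exact fun _ h => absurd h hq
  have hbase : ∀ᶠ q : ℝ × ℝ in 𝓝 p, α.extend q.1 ∈ W := by
    have hcont : ContinuousAt (fun q : ℝ × ℝ => α.extend q.1) p := by fun_prop
    exact hcont.eventually_mem hW
  filter_upwards [nhdsWithin_le_nhds (hhigh.and (hlow.and hbase)), self_mem_nhdsWithin]
    with q ⟨hqhigh, hqlow, hqbase⟩ hq
  by_cases hq₂ : q.2 = 0
  · rw [Set.mem_preimage, arcMap_of_snd_eq_zero hq₂]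
    exact hqbase
  obtain ⟨k, hk, hqk⟩ := exists_mem_levelArcs_of_mem_DAset hq hq₂
  rw [Set.mem_preimage, arcMap_of_mem_levelArcs hΓα hk hqk]
  rcases lt_or_ge k N with hkN | hkN
  · exact hqlow k (Finset.mem_range.2 hkN) hk hqk
  · exact hqhigh k hkN

lemma exists_continuousMap_DAset {lam : ℕ → Path dZero dOne} (hlam : LamSpec lam)
    {α : Path x₀ x} {Γ : ℕ → Path x₀ x}
    (hΓ : Tendsto (fun n => (Γ n : C(unitInterval, X))) atTop (𝓝 α))
    (hΓα : ∀ n, 0 < n → AgreesAtDyadics n (Γ n) α) :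
    ∃ f : C(DAset, X), (∀ n, 0 < n → ∀ t, f (lam n t) = Γ n t) ∧ ∀ t, f (lamInfPath t) = α t := by
  have hcont : ContinuousOn (arcMap α Γ) DAset := fun p hp => by
    by_cases hp₂ : p.2 = 0
    · exact continuousWithinAt_arcMap_of_snd_eq_zero hΓ hΓα hp₂
    · exact continuousWithinAt_arcMap_of_snd_ne_zero hΓα hp hp₂
  refine ⟨⟨DAset.domRestrict (arcMap α Γ), hcont.domRestrict⟩, fun n hn t => ?_, fun t => ?_⟩
  · have hmem := dyadicLevelFun_mem_levelArcs n t.2.1 t.2.2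
    rw [← hlam n hn t] at hmem
    show arcMap α Γ (lam n t) = Γ n t
    rw [arcMap_of_mem_levelArcs hΓα hn hmem, hlam n hn t]
    exact Path.extend_apply _ t.2
  · show arcMap α Γ (lamInfPath t) = α t
    rw [arcMap_of_snd_eq_zero rfl]
    exact Path.extend_apply _ t.2

end ArcMap

lemma tendsto_lam {lam : ℕ → Path dZero dOne} (hlam : LamSpec lam) :
    Tendsto (fun n => (lam n : C(unitInterval, DAset))) atTop (𝓝 lamInfPath) := by
  rw [ContinuousMap.tendsto_iff_tendstoUniformly, Metric.tendstoUniformly_iff]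
  intro ε hε
  obtain ⟨M, hM⟩ := exists_pow_lt_of_lt_one hε (by norm_num : (1 / 2 : ℝ) < 1)
  filter_upwards [eventually_gt_atTop M] with n hn t
  have hbound := abs_snd_le_of_mem_levelArcs (dyadicLevelFun_mem_levelArcs n t.2.1 t.2.2)
  change dist ((lamInfPath t : DAset) : ℝ × ℝ) (lam n t : ℝ × ℝ) < ε
  rw [hlam n (by omega) t, Prod.dist_eq]
  show max (dist (t : ℝ) t) (dist 0 (dyadicLevelFun n t).2) < ε
  rw [dist_self, dist_comm, Real.dist_eq, sub_zero, max_eq_right (abs_nonneg _)]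
  refine hbound.trans_lt (lt_of_le_of_lt ?_ hM)
  rw [one_div_pow, one_div_le_one_div (by positivity) (by positivity)]
  exact pow_le_pow_right₀ one_le_two (by omega)

lemma agreesAtDyadics_lam {lam : ℕ → Path dZero dOne} (hlam : LamSpec lam) {n m : ℕ} (hn : 0 < n)
    (hnm : n ≤ m) : AgreesAtDyadics n (lam m) lamInfPath := by
  intro j hj
  have ht : (j : ℝ) / 2 ^ (n - 1) ∈ Set.Icc (0 : ℝ) 1 :=
    ⟨by positivity, (div_le_one (by positivity)).2 (by exact_mod_cast hj)⟩
  rw [Path.extend_apply _ ht, Path.extend_apply _ ht]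
  apply Subtype.ext
  have hfract : Int.fract ((2 : ℝ) ^ (m - 1) * (j / 2 ^ (n - 1))) = 0 := by
    rw [div_two_pow_eq_of_le j hn hnm, mul_div_cancel₀ _ (by positivity), Int.fract_natCast]
  rw [hlam m (by omega)]
  simp [dyadicLevelFun, hfract, lamInfPath]

theorem isTGClosed_of_homotopicallyPathHausdorffRel {X : Type} [TopologicalSpace X] {x₀ : X}
    {H : Subgroup (FundamentalGroup X x₀)} {lam : ℕ → Path dZero dOne} (hlam : LamSpec lam)
    (hH : HomotopicallyPathHausdorffRel x₀ H) : IsTGClosed dZero (SSub lam) (dInfOf lam) x₀ H := by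
  intro f hf hS
  subst hf
  set Λ : ℕ → Path (f dZero) (f dOne) := fun n => (lam n).map f.continuous
  set A : Path (f dZero) (f dOne) := lamInfPath.map f.continuous
  have hstep : ∀ n, 0 < n → PathEquivMod H (Λ n) (Λ (n + 1)) := fun n hn =>
    hS ⟨_, Subgroup.subset_closure ⟨n, hn, rfl⟩,
      inducedHom_loopClass rfl (trans_symm_apply_eq (fun _ => rfl) fun _ => rfl)⟩
  have hchain : ∀ n, 1 ≤ n → PathEquivMod H (Λ 1) (Λ n) := fun n hn => by
    induction n, hn using Nat.le_induction with
    | base => exact .refl H _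
    | succ n hn ih => exact ih.trans (hstep n hn)
  by_contra hd
  have hA : ¬PathEquivMod H A (Λ 1) := fun h => hd <| by
    rw [dInfOf, inducedHom_loopClass rfl
      (trans_symm_apply_eq (A := Λ 1) (B := A) (fun _ => rfl) fun _ => rfl)]
    exact h.symm
  obtain ⟨n, hn, U, hU, hAU, hsep⟩ := hH _ A (Λ 1) hA
  have hΛ : Tendsto (fun m => (Λ m : C(unitInterval, X))) atTop (𝓝 A) :=
    (f.continuous_postcomp.tendsto _).comp (tendsto_lam hlam)
  obtain ⟨m, hmU, hnm⟩ := ((hΛ.eventually_inDyadicTube hU hAU).and (eventually_ge_atTop n)).exists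
  exact hsep (Λ m) hmU ((agreesAtDyadics_lam hlam hn hnm).map f) (hchain m (by omega)).symm

theorem homotopicallyPathHausdorffRel_of_isTGClosed {X : Type} [TopologicalSpace X] {x₀ : X}
    {H : Subgroup (FundamentalGroup X x₀)} {lam : ℕ → Path dZero dOne} (hlam : LamSpec lam)
    [FirstCountableTopology C(unitInterval, X)]
    (hH : IsTGClosed dZero (SSub lam) (dInfOf lam) x₀ H) :
    HomotopicallyPathHausdorffRel x₀ H := by
  intro x α β hαβ
  by_contra hnot
  push Not at hnot
  obtain ⟨Γ, hΓ, hΓα, hΓβ⟩ := exists_seq_tendsto_of_forall_inDyadicTube α (PathEquivMod H · β)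
    fun n hn U hU hαU => hnot n hn U (fun j _ _ => hU j) hαU
  obtain ⟨f, hfΓ, hfα⟩ := exists_continuousMap_DAset hlam hΓ hΓα
  have hf : f dZero = x₀ := by simpa using hfα 0
  have hS : (SSub lam).map (inducedHom f dZero hf) ≤ H := by
    rw [SSub, MonoidHom.map_closure, Subgroup.closure_le]
    rintro _ ⟨_, ⟨n, hn, rfl⟩, rfl⟩
    rw [inducedHom_loopClass hf (trans_symm_apply_eq (hfΓ n hn) (hfΓ (n + 1) n.succ_pos))]
    exact (hΓβ n).trans (hΓβ (n + 1)).symm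
  have hd := hH f hf hS
  rw [dInfOf, inducedHom_loopClass hf (trans_symm_apply_eq (hfΓ 1 one_pos) hfα)] at hd
  exact hαβ ((show PathEquivMod H (Γ 1) α from hd).symm.trans (hΓβ 1))

theorem stmt12_general {X : Type} [TopologicalSpace X] (x₀ : X)
    (H : Subgroup (FundamentalGroup X x₀))
    (lam : ℕ → Path dZero dOne) (hlam : LamSpec lam) :
    (HomotopicallyPathHausdorffRel x₀ H →
      IsTGClosed dZero (SSub lam) (dInfOf lam) x₀ H) ∧
    (FirstCountableTopology C(unitInterval, X) →
      IsTGClosed dZero (SSub lam) (dInfOf lam) x₀ H →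
      HomotopicallyPathHausdorffRel x₀ H) :=
  ⟨isTGClosed_of_homotopicallyPathHausdorffRel hlam,
    fun _ => homotopicallyPathHausdorffRel_of_isTGClosed hlam⟩

/-- If `X` is homotopically path Hausdorff relative to `H`, then `H` is
`(S, d_∞)`-closed; the converse holds if the path space `C([0,1], X)` (with the
compact-open topology) is first countable. -/
theorem stmt12 {X : Type} [TopologicalSpace X] [PathConnectedSpace X] (x₀ : X)
    (H : Subgroup (FundamentalGroup X x₀))
    (lam : ℕ → Path dZero dOne) (hlam : LamSpec lam) :
    (HomotopicallyPathHausdorffRel x₀ H →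
      IsTGClosed dZero (SSub lam) (dInfOf lam) x₀ H) ∧
    (FirstCountableTopology C(unitInterval, X) →
      IsTGClosed dZero (SSub lam) (dInfOf lam) x₀ H →
      HomotopicallyPathHausdorffRel x₀ H) :=
  stmt12_general x₀ H lam hlam
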